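/- arXiv:1201.5030 — 2 statements merged into one kernel-verified Lean document; each statement's English description precedes it below -/
import Mathlib

section
/- Suppose a nonnegative sequence x^{(0)} = 0, and for each k either x^{(k)} = x^{(k−1)} (rejection) or x^{(k)} = x^{(k−1)}·2^{L_k} + (1/(d_k·w_k))·(2^{L_k} − 1) with L_k = d_k·φ_k/(M·c) (acceptance), where d_k, w_k, φ_k ≥ 0, c > 0, M > 0. Let F^{(j)} = Σ_{accepted k ≤ j} d_k·φ_k and W ≥ max_k d_k·w_k with W > 0. Then for every j, x^{(j)} ≥ (1/W)·(2^{F^{(j)}/(M·c)} − 1). -/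
theorem stmt_4 (x d w φ : ℕ → ℝ) (accept : ℕ → Prop) [DecidablePred accept]
    (M c W : ℝ) (hM : 0 < M) (hc : 0 < c) (hW : 0 < W)
    (hx0 : x 0 = 0)
    (hd : ∀ k, 0 ≤ d k) (hw : ∀ k, 0 ≤ w k) (hφ : ∀ k, 0 ≤ φ k)
    (hφw : ∀ k, φ k ≤ w k)
    (hWb : ∀ k, d k * w k ≤ W)
    (hrej : ∀ k, ¬ accept (k + 1) → x (k + 1) = x k)
    (hacc : ∀ k, accept (k + 1) →
      x (k + 1) = x k * (2 : ℝ) ^ (d (k + 1) * φ (k + 1) / (M * c)) +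
        (1 / (d (k + 1) * w (k + 1))) * ((2 : ℝ) ^ (d (k + 1) * φ (k + 1) / (M * c)) - 1)) :
    ∀ j, (1 / W) * ((2 : ℝ) ^
        ((∑ k ∈ (Finset.Icc 1 j).filter accept, d k * φ k) / (M * c)) - 1) ≤ x j := by
  intro j
  induction j with
  | zero =>
    simp [hx0, Finset.Icc_eq_empty_of_lt (by norm_num : (0:ℕ) < 1)]
  | succ n ih =>
    have hIcc : Finset.Icc 1 (n+1) = insert (n+1) (Finset.Icc 1 n) := by
      ext m; simp [Finset.mem_Icc]; omega
    by_cases hA : accept (n+1)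
    · rw [hIcc, Finset.filter_insert, if_pos hA,
        Finset.sum_insert (by simp), hacc n hA]
      set S := ∑ k ∈ (Finset.Icc 1 n).filter accept, d k * φ k with hS
      set L := d (n+1) * φ (n+1) / (M * c) with hLdef
      have hMc : 0 < M * c := mul_pos hM hc
      have hL : 0 ≤ L := div_nonneg (mul_nonneg (hd _) (hφ _)) hMc.le
      have hsplit : (d (n+1) * φ (n+1) + S) / (M * c) = L + S / (M * c) := by
        rw [add_div]
      rw [hsplit, Real.rpow_add two_pos]
      have h2L : (1:ℝ) ≤ (2:ℝ) ^ L := Real.one_le_rpow one_le_two hL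
      by_cases h0 : d (n+1) * w (n+1) = 0
      · have ha : d (n+1) * φ (n+1) = 0 := by
          have h1 : d (n+1) * φ (n+1) ≤ d (n+1) * w (n+1) :=
            mul_le_mul_of_nonneg_left (hφw _) (hd _)
          have h2 : 0 ≤ d (n+1) * φ (n+1) := mul_nonneg (hd _) (hφ _)
          linarith
        have hL0 : L = 0 := by rw [hLdef, ha, zero_div]
        rw [hL0]
        simp only [Real.rpow_zero]
        linarith
      · have hdw : 0 < d (n+1) * w (n+1) :=
          lt_of_le_of_ne (mul_nonneg (hd _) (hw _)) (Ne.symm h0)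
        have hinv : 1 / W ≤ 1 / (d (n+1) * w (n+1)) :=
          one_div_le_one_div_of_le hdw (hWb (n+1))
        have hih := mul_le_mul_of_nonneg_right ih
          (by positivity : (0:ℝ) ≤ (2:ℝ) ^ L)
        have h2 : (1 / W) * ((2:ℝ) ^ L - 1) ≤
            (1 / (d (n+1) * w (n+1))) * ((2:ℝ) ^ L - 1) :=
          mul_le_mul_of_nonneg_right hinv (by linarith)
        nlinarith [hih, h2]
    · rw [hIcc, Finset.filter_insert, if_neg hA, hrej n hA]
      exact ih
end

section
/- If x ≥ (1/W)(2^{A/(M c)} − 1), then x·2^{B/(Mc)} + (1/w)(2^{B/(Mc)} − 1) ≥ (1/W)(2^{(A+B)/(Mc)} − 1), provided 0 < w ≤ W and A, B ≥ 0, M, c, W > 0. -/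
theorem stmt_15 (x A B M c w W : ℝ) (hA : 0 ≤ A) (hB : 0 ≤ B) (hM : 0 < M)
    (hc : 0 < c) (hW : 0 < W) (hw : 0 < w) (hwW : w ≤ W)
    (hx : x ≥ (1 / W) * ((2 : ℝ) ^ (A / (M * c)) - 1)) :
    x * (2 : ℝ) ^ (B / (M * c)) + (1 / w) * ((2 : ℝ) ^ (B / (M * c)) - 1) ≥
      (1 / W) * ((2 : ℝ) ^ ((A + B) / (M * c)) - 1) := by
  have hMc : 0 < M * c := mul_pos hM hc
  have hbpos : (0:ℝ) < (2:ℝ) ^ (B / (M * c)) := Real.rpow_pos_of_pos (by norm_num) _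
  have hb1 : (1:ℝ) ≤ (2:ℝ) ^ (B / (M * c)) :=
    Real.one_le_rpow (by norm_num) (div_nonneg hB hMc.le)
  have hsplit : (2:ℝ) ^ ((A + B) / (M * c)) =
      (2:ℝ) ^ (A / (M * c)) * (2:ℝ) ^ (B / (M * c)) := by
    rw [add_div, Real.rpow_add (by norm_num)]
  have h1 : (1 / w) * ((2:ℝ) ^ (B / (M * c)) - 1) ≥ (1 / W) * ((2:ℝ) ^ (B / (M * c)) - 1) :=
    mul_le_mul_of_nonneg_right (one_div_le_one_div_of_le hw hwW) (by linarith)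
  have h2 : x * (2:ℝ) ^ (B / (M * c)) ≥
      (1 / W) * ((2:ℝ) ^ (A / (M * c)) - 1) * (2:ℝ) ^ (B / (M * c)) :=
    mul_le_mul_of_nonneg_right hx hbpos.le
  rw [hsplit]
  nlinarith [h1, h2]
end
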